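/- arXiv:1402.4070 — 7 statements merged into one kernel-verified Lean document; each statement's English description precedes it below -/
import Mathlib

section
/- Let K be the 6×6 block matrix K = [[F₂, Z₁, Z₂], [Z₃, a, b], [Z₄, c, d]], where z₁, z₂, z₃, z₄ ∈ ℂ have modulus 1, F₂, Z₁, Z₂, Z₃, Z₄ are as defined, and a, b, c, d are 2×2 complex matrices all of whose entries have modulus 1 and whose two rows are orthogonal (a₁₁·conj(a₂₁) + a₁₂·conj(a₂₂) = 0, and similarly for b, c, d). Then for ρ = (1,−1,1,−1,1,−1) one has g(ρ) = Σ_{k=1}^{6} Π_{i=1}^{6} K_{ik}^{ρ_i} = 0. -/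
/-!
With ρ alternating, the k-th product is (K₁ₖ/K₂ₖ)(K₃ₖ/K₄ₖ)(K₅ₖ/K₆ₖ), and the six columns
cancel in pairs. Columns 1 and 2 give 1 and (−1)³. For a 2×2 matrix `m` whose second row has
entries of equal modulus, orthogonality of the rows says exactly m₁₂/m₂₂ = −m₁₁/m₂₁, because
conj w = ‖w‖²/w. So each of the three ratios in column 4 is minus the corresponding one in
column 3, and likewise for columns 6 and 5.
-/

open ComplexConjugate

theorem Complex.div_eq_neg_div_of_mul_conj_add_mul_conj_eq_zero {x y u v : ℂ}
    (huv : ‖u‖ = ‖v‖) (h : x * conj u + y * conj v = 0) : y / v = -(x / u) := by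
  have hnormSq : normSq u = normSq v := by
    rw [normSq_eq_norm_sq, normSq_eq_norm_sq, huv]
  rw [eq_neg_iff_add_eq_zero, div_eq_mul_inv, div_eq_mul_inv, inv_def, inv_def, ← hnormSq]
  push_cast
  linear_combination (normSq u : ℂ)⁻¹ * h

theorem Fin.prod_univ_six_zpow_alternating {F : Type*} [Field F] (f : Fin 6 → F) :
    ∏ i, f i ^ (![1, -1, 1, -1, 1, -1] : Fin 6 → ℤ) i =
      f 0 / f 1 * (f 2 / f 3) * (f 4 / f 5) := by
  simp only [Fin.prod_univ_six, Matrix.cons_val_zero, Matrix.cons_val_one, Matrix.cons_val,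
    zpow_one, zpow_neg, div_eq_mul_inv]
  ring

theorem karlsson_g_rho_case1_eq_zero_general (z1 z2 z3 z4 : ℂ)
    (hz3 : ‖z3‖ = 1) (hz4 : ‖z4‖ = 1)
    (a b c d : Matrix (Fin 2) (Fin 2) ℂ)
    (hamod : ∀ i j, ‖a i j‖ = 1)
    (hbmod : ∀ i j, ‖b i j‖ = 1)
    (hcmod : ∀ i j, ‖c i j‖ = 1)
    (hdmod : ∀ i j, ‖d i j‖ = 1)
    (haorth : a 0 0 * (starRingEnd ℂ) (a 1 0) + a 0 1 * (starRingEnd ℂ) (a 1 1) = 0)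
    (hborth : b 0 0 * (starRingEnd ℂ) (b 1 0) + b 0 1 * (starRingEnd ℂ) (b 1 1) = 0)
    (hcorth : c 0 0 * (starRingEnd ℂ) (c 1 0) + c 0 1 * (starRingEnd ℂ) (c 1 1) = 0)
    (hdorth : d 0 0 * (starRingEnd ℂ) (d 1 0) + d 0 1 * (starRingEnd ℂ) (d 1 1) = 0)
    (K : Matrix (Fin 6) (Fin 6) ℂ)
    (hK : K = !![1, 1,   1,     1,     1,     1;
                 1, -1,  z1,    -z1,   z2,    -z2;
                 1, z3,  a 0 0, a 0 1, b 0 0, b 0 1;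
                 1, -z3, a 1 0, a 1 1, b 1 0, b 1 1;
                 1, z4,  c 0 0, c 0 1, d 0 0, d 0 1;
                 1, -z4, c 1 0, c 1 1, d 1 0, d 1 1])
    (ρ : Fin 6 → ℤ)
    (hρ : ρ = ![1, -1, 1, -1, 1, -1]) :
    ∑ k : Fin 6, ∏ i : Fin 6, K i k ^ ρ i = 0 := by
  have ne_zero {w : ℂ} (hw : ‖w‖ = 1) : w ≠ 0 := norm_ne_zero_iff.mp (hw ▸ one_ne_zero)
  have ratio {m : Matrix (Fin 2) (Fin 2) ℂ} (hmod : ∀ i j, ‖m i j‖ = 1)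
      (horth : m 0 0 * conj (m 1 0) + m 0 1 * conj (m 1 1) = 0) :
      m 0 1 / m 1 1 = -(m 0 0 / m 1 0) :=
    Complex.div_eq_neg_div_of_mul_conj_add_mul_conj_eq_zero (by rw [hmod, hmod]) horth
  subst hK hρ
  simp only [Fin.prod_univ_six_zpow_alternating, Fin.sum_univ_six, Matrix.of_apply,
    Matrix.cons_val_zero, Matrix.cons_val_one, Matrix.cons_val]
  rw [ratio hamod haorth, ratio hbmod hborth, ratio hcmod hcorth, ratio hdmod hdorth,
    div_neg_self (ne_zero hz3), div_neg_self (ne_zero hz4)]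
  ring

/-- Case 1 of Theorem 1: for the 6×6 block matrix K = [[F₂,Z₁,Z₂],[Z₃,a,b],[Z₄,c,d]]
with |zᵢ| = 1 and a, b, c, d having unimodular entries and orthogonal rows,
for ρ = (1,−1,1,−1,1,−1) one has g(ρ) = Σ_{k=1}^{6} Π_{i=1}^{6} K_{ik}^{ρ_i} = 0. -/
theorem karlsson_g_rho_case1_eq_zero (z1 z2 z3 z4 : ℂ)
    (hz1 : ‖z1‖ = 1) (hz2 : ‖z2‖ = 1)
    (hz3 : ‖z3‖ = 1) (hz4 : ‖z4‖ = 1)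
    (a b c d : Matrix (Fin 2) (Fin 2) ℂ)
    (hamod : ∀ i j, ‖a i j‖ = 1)
    (hbmod : ∀ i j, ‖b i j‖ = 1)
    (hcmod : ∀ i j, ‖c i j‖ = 1)
    (hdmod : ∀ i j, ‖d i j‖ = 1)
    (haorth : a 0 0 * (starRingEnd ℂ) (a 1 0) + a 0 1 * (starRingEnd ℂ) (a 1 1) = 0)
    (hborth : b 0 0 * (starRingEnd ℂ) (b 1 0) + b 0 1 * (starRingEnd ℂ) (b 1 1) = 0)
    (hcorth : c 0 0 * (starRingEnd ℂ) (c 1 0) + c 0 1 * (starRingEnd ℂ) (c 1 1) = 0)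
    (hdorth : d 0 0 * (starRingEnd ℂ) (d 1 0) + d 0 1 * (starRingEnd ℂ) (d 1 1) = 0)
    (K : Matrix (Fin 6) (Fin 6) ℂ)
    (hK : K = !![1, 1,   1,     1,     1,     1;
                 1, -1,  z1,    -z1,   z2,    -z2;
                 1, z3,  a 0 0, a 0 1, b 0 0, b 0 1;
                 1, -z3, a 1 0, a 1 1, b 1 0, b 1 1;
                 1, z4,  c 0 0, c 0 1, d 0 0, d 0 1;
                 1, -z4, c 1 0, c 1 1, d 1 0, d 1 1])
    (ρ : Fin 6 → ℤ)
    (hρ : ρ = ![1, -1, 1, -1, 1, -1]) :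
    ∑ k : Fin 6, ∏ i : Fin 6, K i k ^ ρ i = 0 :=
  karlsson_g_rho_case1_eq_zero_general z1 z2 z3 z4 hz3 hz4 a b c d hamod hbmod hcmod hdmod haorth
    hborth hcorth hdorth K hK ρ hρ
end

section
/- For all θ, φ ∈ ℝ, with A₁₁, A₁₂, B₁₁, B₁₂ as defined, one has Re(A₁₁² · conj(B₁₁)²) = Re(A₁₂² · conj(B₁₂)²). (In the proof of Theorem 1 this shows the coefficient t₀ vanishes.) -/
/-! With `A = -1/2 + z` and `B = -1 - A = -1/2 - z` one has `A² · conj(B)² = (A · conj B)²` and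
`A · conj B = 1/4 - |z|² - i · Im z`, so `Re(A² · conj(B)²) = (1/4 - |z|²)² - (Im z)²`.
For `z = i r (a + w b)` with `|w| = 1` this is a polynomial in `a, b, r, Re w` whose odd part in `a`
is a multiple of `3 - 4 r² (a² + b²)`. With `r = √3/2` and `(a, b) = (± cos θ, sin θ)` it vanishes,
and `A₁₁`, `A₁₂` differ exactly by `a ↦ -a` and `w = e^{∓iφ}`, which have the same real part. -/

open Complex ComplexConjugate

namespace Karlsson

theorem re_sq_mul_conj_sq_neg_one_sub (z : ℂ) :
    ((-(1/2 : ℂ) + z) ^ 2 * conj (-1 - (-(1/2 : ℂ) + z)) ^ 2).re =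
      (1/4 - normSq z) ^ 2 - z.im ^ 2 := by
  have hconj : conj (-1 - (-(1/2 : ℂ) + z)) = -(1/2) - conj z := by
    simp only [map_sub, map_add, map_neg, map_one, map_div₀, map_ofNat]; ring
  have him : z - conj z = 2 * z.im * I := by rw [sub_conj, ofReal_mul, ofReal_ofNat]
  have hprod : (-(1/2 : ℂ) + z) * conj (-1 - (-(1/2 : ℂ) + z)) =
      ((1/4 - normSq z : ℝ) : ℂ) - z.im * I := by
    rw [hconj, ofReal_sub, ← mul_conj]; push_cast
    linear_combination (-1/2 : ℂ) * him
  rw [← mul_pow, hprod, sq]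
  simp only [mul_re, sub_re, sub_im, ofReal_re, ofReal_im, mul_im, I_re, I_im]
  ring

theorem im_I_mul_ofReal_mul (r a b : ℝ) (w : ℂ) :
    (I * r * (a + w * b)).im = r * (a + b * w.re) := by
  simp only [mul_im, mul_re, add_re, add_im, I_re, I_im, ofReal_re, ofReal_im]
  ring

theorem normSq_I_mul_ofReal_mul (r a b : ℝ) (w : ℂ) :
    normSq (I * r * (a + w * b)) = r ^ 2 * (a ^ 2 + b ^ 2 * normSq w + 2 * a * b * w.re) := by
  rw [map_mul, map_mul, normSq_I, normSq_ofReal, normSq_add, map_mul, normSq_ofReal,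
    normSq_ofReal, map_mul, conj_ofReal]
  simp only [mul_re, conj_re, conj_im, ofReal_re, ofReal_im]
  ring

theorem normSq_exp_ofReal_mul_I (x : ℝ) : normSq (exp (x * I)) = 1 := by
  rw [normSq_eq_norm_sq, norm_exp_ofReal_mul_I, one_pow]

theorem even_in_fst_of_four_mul_sq_mul_eq_three {r a b k : ℝ}
    (h : 4 * r ^ 2 * (a ^ 2 + b ^ 2) = 3) :
    (1/4 - r ^ 2 * (a ^ 2 + b ^ 2 + 2 * a * b * k)) ^ 2 - (r * (a + b * k)) ^ 2 =
      (1/4 - r ^ 2 * ((-a) ^ 2 + b ^ 2 + 2 * (-a) * b * k)) ^ 2 - (r * (-a + b * k)) ^ 2 := by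
  linear_combination 2 * r ^ 2 * a * b * k * h

end Karlsson

open Karlsson in
/-- For all θ, φ ∈ ℝ, with A₁₁, A₁₂, B₁₁, B₁₂ as in Karlsson's parametrisation,
Re(A₁₁² · conj(B₁₁)²) = Re(A₁₂² · conj(B₁₂)²). -/
theorem karlsson_t0_re_eq (θ φ : ℝ) (A11 A12 B11 B12 : ℂ)
    (hA11 : A11 = -(1/2 : ℂ) + Complex.I * ((Real.sqrt 3 : ℂ) / 2) *
      ((Real.cos θ : ℂ) + Complex.exp (-Complex.I * (φ : ℂ)) * (Real.sin θ : ℂ)))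
    (hA12 : A12 = -(1/2 : ℂ) + Complex.I * ((Real.sqrt 3 : ℂ) / 2) *
      (-(Real.cos θ : ℂ) + Complex.exp (Complex.I * (φ : ℂ)) * (Real.sin θ : ℂ)))
    (hB11 : B11 = -1 - A11) (hB12 : B12 = -1 - A12) :
    (A11 ^ 2 * ((starRingEnd ℂ) B11) ^ 2).re = (A12 ^ 2 * ((starRingEnd ℂ) B12) ^ 2).re := by
  have hA11' : A11 = -(1/2 : ℂ) +
      I * ((Real.sqrt 3 / 2 : ℝ) : ℂ) * (Real.cos θ + exp ((-φ : ℝ) * I) * Real.sin θ) := by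
    rw [hA11]; push_cast; ring_nf
  have hA12' : A12 = -(1/2 : ℂ) +
      I * ((Real.sqrt 3 / 2 : ℝ) : ℂ) * ((-Real.cos θ : ℝ) + exp (φ * I) * Real.sin θ) := by
    rw [hA12]; push_cast; ring_nf
  have hr : 4 * (Real.sqrt 3 / 2) ^ 2 * (Real.cos θ ^ 2 + Real.sin θ ^ 2) = 3 := by
    rw [Real.cos_sq_add_sin_sq, div_pow, Real.sq_sqrt (by norm_num)]; norm_num
  subst hB11 hB12
  rw [hA11', hA12', re_sq_mul_conj_sq_neg_one_sub, re_sq_mul_conj_sq_neg_one_sub,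
    im_I_mul_ofReal_mul, im_I_mul_ofReal_mul, normSq_I_mul_ofReal_mul, normSq_I_mul_ofReal_mul,
    normSq_exp_ofReal_mul_I, normSq_exp_ofReal_mul_I, exp_ofReal_mul_I_re, exp_ofReal_mul_I_re,
    Real.cos_neg]
  simpa using even_in_fst_of_four_mul_sq_mul_eq_three hr
end

section
/- Fix θ, φ ∈ ℝ and let A = [[A₁₁, A₁₂], [conj(A₁₂), −conj(A₁₁)]] with A₁₁, A₁₂ as defined. Let z₁, z₃ ∈ ℂ with |z₁| = |z₃| = 1, Z₃ = [[1,z₃],[1,−z₃]], Z₁ = [[1,1],[z₁,−z₁]], and a = (1/2)Z₃AZ₁. Then a · a* = 2·I₂ (where a* is the conjugate transpose); in particular the two rows of a are orthogonal: a₁₁·conj(a₂₁) + a₁₂·conj(a₂₂) = 0. -/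
/-!
Each factor of `a = (1/2) Z₃ A Z₁` is `√2` times a unitary matrix: for `Z₁` and `Z₃` this only
needs `|z₁| = |z₃| = 1`, and `A` has the shape `[[α, β], [β̄, -ᾱ]]`, so `A A* = (|α|² + |β|²) I₂`
with `|A₁₁|² + |A₁₂|² = 2`. Hence `a a* = (1/4) · 2 · 2 · 2 · I₂ = 2 I₂`.
-/

open Complex ComplexConjugate
open scoped Matrix

namespace Matrix

variable {n R : Type*} [Fintype n] [CommRing R] [StarRing R]

theorem smul_mul_conjTranspose_smul (k : R) (M : Matrix n n R) :
    k • M * (k • M)ᴴ = (k * star k) • (M * Mᴴ) := by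
  rw [conjTranspose_smul, smul_mul, Matrix.mul_smul, smul_smul]

theorem mul_mul_conjTranspose_mul [DecidableEq n] {M N : Matrix n n R} {c d : R}
    (hM : M * Mᴴ = c • 1) (hN : N * Nᴴ = d • 1) : M * N * (M * N)ᴴ = (c * d) • 1 := by
  rw [conjTranspose_mul, mul_assoc, ← mul_assoc N, hN, smul_one_mul, Matrix.mul_smul, hM,
    smul_smul, mul_comm]

theorem fin_two_star_mul_conjTranspose (α β : R) :
    !![α, β; star β, -star α] * !![α, β; star β, -star α]ᴴ = (α * star α + β * star β) • 1 := by
  ext i j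
  fin_cases i <;> fin_cases j <;> simp [mul_apply, Fin.sum_univ_two] <;> ring

theorem fin_two_col_mul_conjTranspose {z : R} (hz : z * star z = 1) :
    !![1, z; 1, -z] * !![1, z; 1, -z]ᴴ = (2 : R) • 1 := by
  ext i j
  fin_cases i <;> fin_cases j <;> simp [mul_apply, Fin.sum_univ_two, hz] <;> norm_num

theorem fin_two_row_mul_conjTranspose {z : R} (hz : z * star z = 1) :
    !![1, 1; z, -z] * !![1, 1; z, -z]ᴴ = (2 : R) • 1 := by
  ext i j
  fin_cases i <;> fin_cases j <;> simp [mul_apply, Fin.sum_univ_two, hz] <;> ring_nf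

end Matrix

theorem Complex.mul_conj_eq_one_of_norm_eq_one {z : ℂ} (hz : ‖z‖ = 1) : z * conj z = 1 := by
  rw [mul_conj', hz, ofReal_one, one_pow]

theorem mul_conj_add_mul_conj_eq_two {c s : ℝ} (hcs : c ^ 2 + s ^ 2 = 1) {e : ℂ}
    (he : e * conj e = 1) :
    let α := -(1 / 2 : ℂ) + I * ((√3 : ℂ) / 2) * ((c : ℂ) + conj e * (s : ℂ))
    let β := -(1 / 2 : ℂ) + I * ((√3 : ℂ) / 2) * (-(c : ℂ) + e * (s : ℂ))
    α * conj α + β * conj β = 2 := by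
  intro α β
  have h3 : (√3 : ℂ) ^ 2 = 3 := by norm_cast; simp
  have hcs' : (c : ℂ) ^ 2 + (s : ℂ) ^ 2 = 1 := by exact_mod_cast hcs
  simp only [α, β, map_add, map_mul, map_neg, map_div₀, map_one, map_ofNat, conj_ofReal, conj_I,
    conj_conj]
  -- the cross terms cancel, leaving `1/2 - I² (√3)² X / 2`
  set X : ℂ := (c : ℂ) ^ 2 + (s : ℂ) ^ 2 * (e * conj e)
  linear_combination (-(√3 : ℂ) ^ 2 * X / 2) * I_sq + (X / 2) * h3 + (3 / 2 : ℂ) * hcs'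
    + (3 / 2 * (s : ℂ) ^ 2) * he

/-- With A₁₁, A₁₂ as in Karlsson's parametrisation, |z₁| = |z₃| = 1 and
a = (1/2)Z₃AZ₁, one has a·a* = 2·I₂; in particular the two rows of a are orthogonal. -/
theorem karlsson_a_unitary (θ φ : ℝ) (A11 A12 z1 z3 : ℂ)
    (hA11 : A11 = -(1/2 : ℂ) + Complex.I * ((Real.sqrt 3 : ℂ) / 2) *
      ((Real.cos θ : ℂ) + Complex.exp (-Complex.I * (φ : ℂ)) * (Real.sin θ : ℂ)))
    (hA12 : A12 = -(1/2 : ℂ) + Complex.I * ((Real.sqrt 3 : ℂ) / 2) *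
      (-(Real.cos θ : ℂ) + Complex.exp (Complex.I * (φ : ℂ)) * (Real.sin θ : ℂ)))
    (hz1 : ‖z1‖ = 1) (hz3 : ‖z3‖ = 1)
    (A Z3 Z1 a : Matrix (Fin 2) (Fin 2) ℂ)
    (hA : A = !![A11, A12; (starRingEnd ℂ) A12, -(starRingEnd ℂ) A11])
    (hZ3 : Z3 = !![1, z3; 1, -z3])
    (hZ1 : Z1 = !![1, 1; z1, -z1])
    (ha : a = (1/2 : ℂ) • (Z3 * A * Z1)) :
    a * a.conjTranspose = (2 : ℂ) • (1 : Matrix (Fin 2) (Fin 2) ℂ) ∧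
    a 0 0 * (starRingEnd ℂ) (a 1 0) + a 0 1 * (starRingEnd ℂ) (a 1 1) = 0 := by
  have hexp : exp (-I * φ) = conj (exp (I * φ)) := by
    rw [← exp_conj, map_mul, conj_I, conj_ofReal]
  have hentries : A11 * conj A11 + A12 * conj A12 = 2 := by
    rw [hA11, hA12, hexp]
    refine mul_conj_add_mul_conj_eq_two (Real.cos_sq_add_sin_sq θ) ?_
    rw [← exp_conj, ← exp_add, map_mul, conj_I, conj_ofReal, neg_mul, add_neg_cancel, exp_zero]
  have hA' : A * Aᴴ = (2 : ℂ) • 1 := by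
    rw [hA, ← hentries]
    exact Matrix.fin_two_star_mul_conjTranspose A11 A12
  have hZ3' : Z3 * Z3ᴴ = (2 : ℂ) • 1 :=
    hZ3 ▸ Matrix.fin_two_col_mul_conjTranspose (mul_conj_eq_one_of_norm_eq_one hz3)
  have hZ1' : Z1 * Z1ᴴ = (2 : ℂ) • 1 :=
    hZ1 ▸ Matrix.fin_two_row_mul_conjTranspose (mul_conj_eq_one_of_norm_eq_one hz1)
  have hunitary : a * aᴴ = (2 : ℂ) • 1 := by
    rw [ha, Matrix.smul_mul_conjTranspose_smul,
      Matrix.mul_mul_conjTranspose_mul (Matrix.mul_mul_conjTranspose_mul hZ3' hA') hZ1', smul_smul]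
    norm_num
  refine ⟨hunitary, ?_⟩
  simpa [Matrix.mul_apply, Fin.sum_univ_two] using congrFun₂ hunitary 0 1
end

section
/- Let H be a d×d complex Hadamard matrix. Then for every γ ∈ ℤ^d, Σ_{r=1}^{d} G_H(γ + π_r) = d². -/
open Finset

/-- The permutation-symmetrised squared Fourier coefficient
G_H(γ) = (1/d!) Σ_σ |Σ_k Π_i H_{ik}^{γ_{σ(i)}}|². -/
noncomputable def bigGsingle (d : ℕ) (H : Matrix (Fin d) (Fin d) ℂ) (γ : Fin d → ℤ) : ℝ :=
  (1 / (Nat.factorial d : ℝ)) * ∑ σ : Equiv.Perm (Fin d),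
    ‖∑ k : Fin d, ∏ i : Fin d, H i k ^ γ (σ i)‖ ^ 2

/-! Fix a permutation σ. Raising the exponent of the row `σ⁻¹ r` by one multiplies the
`k`-th term of `g_H^σ(γ + π_r)` by `H_{σ⁻¹ r, k}`, so `g_H^σ(γ + π_r) = (H a)_{σ⁻¹ r}`, where
`a_k = Π_i H_{ik}^{γ_{σ(i)}}` is a unimodular vector. Summing over `r` therefore gives
`‖H a‖² = d ‖a‖² = d²`, since `H / √d` is unitary, and averaging over σ keeps the value `d²`. -/

open scoped Matrix

namespace Matrix

variable {ι K : Type*} [Fintype ι] [DecidableEq ι]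

theorem mul_eq_smul_one_comm [Field K] {A B : Matrix ι ι K} {c : K} (hc : c ≠ 0)
    (h : A * B = c • 1) : B * A = c • 1 := by
  have hinv : A * (c⁻¹ • B) = 1 := by
    rw [Matrix.mul_smul, h, smul_smul, inv_mul_cancel₀ hc, one_smul]
  rw [← smul_right_inj (inv_ne_zero hc), ← smul_mul, mul_eq_one_comm.mp hinv, smul_smul,
    inv_mul_cancel₀ hc, one_smul]

theorem sum_norm_sq_mulVec [RCLike K] {A : Matrix ι ι K} {c : ℝ} (hA : Aᴴ * A = (c : K) • 1)
    (a : ι → K) : ∑ j, ‖(A *ᵥ a) j‖ ^ 2 = c * ∑ k, ‖a k‖ ^ 2 := by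
  have hdot : ∀ v : ι → K, star v ⬝ᵥ v = ((∑ j, ‖v j‖ ^ 2 : ℝ) : K) := fun v => by
    simp only [dotProduct, Pi.star_apply, RCLike.star_def, RCLike.conj_mul, RCLike.ofReal_sum,
      RCLike.ofReal_pow]
  have h : star (A *ᵥ a) ⬝ᵥ (A *ᵥ a) = (c : K) * (star a ⬝ᵥ a) := by
    rw [star_mulVec, ← dotProduct_mulVec, mulVec_mulVec, hA, smul_mulVec, one_mulVec,
      dotProduct_smul, smul_eq_mul]
  rw [hdot, hdot, ← RCLike.ofReal_mul] at h
  exact_mod_cast h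

end Matrix

theorem prod_zpow_add_single {ι G : Type*} [Fintype ι] [DecidableEq ι] [CommGroupWithZero G]
    {x : ι → G} (hx : ∀ i, x i ≠ 0) (γ : ι → ℤ) (r : ι) :
    ∏ i, x i ^ (γ + Pi.single r 1 : ι → ℤ) i = x r * ∏ i, x i ^ γ i := by
  simp_rw [Pi.add_apply, zpow_add₀ (hx _), prod_mul_distrib]
  rw [mul_comm, prod_eq_single r (fun i _ hi => by rw [Pi.single_eq_of_ne hi, zpow_zero])
    (fun h => absurd (mem_univ r) h), Pi.single_eq_same, zpow_one]

theorem prod_zpow_perm_add_single {ι G : Type*} [Fintype ι] [DecidableEq ι] [CommGroupWithZero G]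
    {x : ι → G} (hx : ∀ i, x i ≠ 0) (γ : ι → ℤ) (σ : Equiv.Perm ι) (r : ι) :
    ∏ i, x i ^ (γ + Pi.single r 1 : ι → ℤ) (σ i) = x (σ.symm r) * ∏ i, x i ^ γ (σ i) := by
  have hcomp : (γ + Pi.single r 1) ∘ σ = γ ∘ σ + Pi.single (σ.symm r) 1 := by
    rw [Pi.add_comp, Pi.single_comp_equiv]
  exact (congrArg (fun f => ∏ i, x i ^ f i) hcomp).trans (prod_zpow_add_single hx _ _)

theorem sum_norm_sq_sum_prod_zpow_perm_add_single {ι : Type*} [Fintype ι] [DecidableEq ι]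
    {H : Matrix ι ι ℂ} {c : ℝ} (hmod : ∀ i j, ‖H i j‖ = 1) (hH : Hᴴ * H = (c : ℂ) • 1)
    (γ : ι → ℤ) (σ : Equiv.Perm ι) :
    ∑ r, ‖∑ k, ∏ i, H i k ^ (γ + Pi.single r 1 : ι → ℤ) (σ i)‖ ^ 2 = c * Fintype.card ι := by
  set a : ι → ℂ := fun k => ∏ i, H i k ^ γ (σ i)
  have ha : ∀ k, ‖a k‖ = 1 := fun k => by simp [a, norm_prod, norm_zpow, hmod]
  have hne : ∀ i k, H i k ≠ 0 := fun i k => norm_ne_zero_iff.mp (by simp [hmod])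
  calc ∑ r, ‖∑ k, ∏ i, H i k ^ (γ + Pi.single r 1 : ι → ℤ) (σ i)‖ ^ 2
      = ∑ r, ‖(H *ᵥ a) (σ.symm r)‖ ^ 2 := by
        simp only [prod_zpow_perm_add_single (hne · _)]
        rfl
    _ = ∑ j, ‖(H *ᵥ a) j‖ ^ 2 := σ.symm.sum_comp fun j => ‖(H *ᵥ a) j‖ ^ 2
    _ = c * Fintype.card ι := by simp [Matrix.sum_norm_sq_mulVec hH, ha]

/-- For a d×d complex Hadamard matrix H and any γ ∈ ℤ^d,
Σ_{r=1}^{d} G_H(γ + π_r) = d². -/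
theorem hadamard_sum_G_shift (d : ℕ) (H : Matrix (Fin d) (Fin d) ℂ)
    (hmod : ∀ i j, ‖H i j‖ = 1)
    (hH : H * H.conjTranspose = (d : ℂ) • (1 : Matrix (Fin d) (Fin d) ℂ))
    (γ : Fin d → ℤ) :
    ∑ r : Fin d, bigGsingle d H (γ + Pi.single r 1) = (d : ℝ) ^ 2 := by
  obtain rfl | hd := eq_or_ne d 0
  · simp
  have hHc : Hᴴ * H = ((d : ℝ) : ℂ) • 1 := by
    exact_mod_cast Matrix.mul_eq_smul_one_comm (Nat.cast_ne_zero.mpr hd) hH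
  calc ∑ r, bigGsingle d H (γ + Pi.single r 1)
      = (1 / (Nat.factorial d : ℝ)) * ∑ σ : Equiv.Perm (Fin d), ∑ r,
          ‖∑ k, ∏ i, H i k ^ (γ + Pi.single r 1 : Fin d → ℤ) (σ i)‖ ^ 2 := by
        simp only [bigGsingle, ← mul_sum]
        rw [sum_comm]
    _ = (1 / (Nat.factorial d : ℝ)) * ∑ _σ : Equiv.Perm (Fin d), (d : ℝ) * d := by
        simp only [sum_norm_sq_sum_prod_zpow_perm_add_single hmod hHc, Fintype.card_fin]
    _ = (d : ℝ) ^ 2 := by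
        rw [sum_const, card_univ, Fintype.card_perm, Fintype.card_fin, nsmul_eq_mul]
        field_simp
end

section
/- Let H₁, …, H_d be d×d complex Hadamard matrices. Then for every γ ∈ ℤ^d, d·G(γ) + Σ_{r ≠ t} G(γ + π_r − π_t) = d⁴, where the sum ranges over all ordered pairs (r,t) with 1 ≤ r, t ≤ d and r ≠ t. -/
/-!
Shifting the exponent vector by `π_r - π_t` multiplies the `k`-th term of `g_j^σ` by
`H_{σ⁻¹r,k} / H_{σ⁻¹t,k} = H_{σ⁻¹r,k} · conj H_{σ⁻¹t,k}`. The diagonal pairs `r = t` supply the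
term `d · G(γ)`, so the left-hand side is `Σ_{r,t} G(γ + π_r - π_t)`, and for each `σ` and `j`
the summand becomes `Σ_{a,b} |Σ_k c_k H_{ak} conj H_{bk}|²` with unimodular `c_k`. Since `H / √d`
is unitary, Parseval's identity in `a` turns this into `d · Σ_b Σ_k |c_k H_{bk}|² = d³`;
summing over `j` and averaging over `σ` gives `d⁴`.
-/

open Finset

/-- G(γ) = (1/d!) Σ_σ Σ_j |g_j^σ(γ)|², where
g_j^σ(γ) = Σ_k Π_i (H_j)_{ik}^{γ_{σ(i)}}. -/
noncomputable def bigG (d : ℕ) (Hs : Fin d → Matrix (Fin d) (Fin d) ℂ) (γ : Fin d → ℤ) : ℝ :=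
  (1 / (Nat.factorial d : ℝ)) * ∑ σ : Equiv.Perm (Fin d), ∑ j : Fin d,
    ‖∑ k : Fin d, ∏ i : Fin d, (Hs j) i k ^ γ (σ i)‖ ^ 2

/-- F(γ) = (1/d!) Σ_σ |Σ_j g_j^σ(γ)|², where
g_j^σ(γ) = Σ_k Π_i (H_j)_{ik}^{γ_{σ(i)}}. -/
noncomputable def bigF (d : ℕ) (Hs : Fin d → Matrix (Fin d) (Fin d) ℂ) (γ : Fin d → ℤ) : ℝ :=
  (1 / (Nat.factorial d : ℝ)) * ∑ σ : Equiv.Perm (Fin d),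
    ‖∑ j : Fin d, ∑ k : Fin d, ∏ i : Fin d, (Hs j) i k ^ γ (σ i)‖ ^ 2

open ComplexConjugate

theorem Fintype.prod_zpow_add_single_sub_single {ι G₀ : Type*} [Fintype ι] [DecidableEq ι]
    [CommGroupWithZero G₀] {x : ι → G₀} (hx : ∀ i, x i ≠ 0) (γ : ι → ℤ) (r t : ι) :
    ∏ i, x i ^ (γ + Pi.single r 1 - Pi.single t 1 : ι → ℤ) i = (∏ i, x i ^ γ i) * x r / x t := by
  have prod_single (s : ι) : ∏ i, x i ^ (Pi.single s 1 : ι → ℤ) i = x s := by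
    rw [Fintype.prod_eq_single s fun i hi => by rw [Pi.single_eq_of_ne hi, zpow_zero]]
    simp
  simp only [Pi.sub_apply, Pi.add_apply, zpow_sub₀ (hx _), zpow_add₀ (hx _),
    Finset.prod_div_distrib, Finset.prod_mul_distrib, prod_single]

theorem Fintype.sum_sum_eq_sum_diag_add_sum_sum_ite_ne {ι M : Type*} [Fintype ι] [DecidableEq ι]
    [AddCommMonoid M] (f : ι → ι → M) :
    ∑ r, ∑ t, f r t = ∑ r, f r r + ∑ r, ∑ t, if r ≠ t then f r t else 0 := by
  have split (r t : ι) : f r t = (if r = t then f r t else 0) + if r ≠ t then f r t else 0 := by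
    by_cases h : r = t <;> simp [h]
  conv_lhs => enter [2, r, 2, t]; rw [split r t]
  simp only [Finset.sum_add_distrib, Finset.sum_ite_eq, Finset.mem_univ, if_true]

namespace Matrix

variable {n : Type*} [Fintype n] [DecidableEq n]

def IsComplexHadamard (H : Matrix n n ℂ) : Prop :=
  (∀ i k, ‖H i k‖ = 1) ∧ H * Hᴴ = (Fintype.card n : ℂ) • 1

namespace IsComplexHadamard

variable {H : Matrix n n ℂ}

theorem ne_zero (hH : H.IsComplexHadamard) (i k : n) : H i k ≠ 0 :=
  norm_ne_zero_iff.mp (by rw [hH.1]; exact one_ne_zero)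

theorem inv_apply (hH : H.IsComplexHadamard) (i k : n) : (H i k)⁻¹ = conj (H i k) :=
  inv_eq_of_mul_eq_one_right (by rw [Complex.mul_conj', hH.1]; norm_num)

theorem conjTranspose_mul_self (hH : H.IsComplexHadamard) :
    Hᴴ * H = (Fintype.card n : ℂ) • 1 := by
  rcases isEmpty_or_nonempty n with hn | hn
  · exact Subsingleton.elim _ _
  have hd : (Fintype.card n : ℂ) ≠ 0 := Nat.cast_ne_zero.mpr Fintype.card_ne_zero
  have hinv : H * ((Fintype.card n : ℂ)⁻¹ • Hᴴ) = 1 := by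
    rw [Matrix.mul_smul, hH.2, smul_smul, inv_mul_cancel₀ hd, one_smul]
  calc Hᴴ * H = (Fintype.card n : ℂ) • (((Fintype.card n : ℂ)⁻¹ • Hᴴ) * H) := by
        rw [smul_mul, smul_smul, mul_inv_cancel₀ hd, one_smul]
    _ = (Fintype.card n : ℂ) • 1 := by rw [mul_eq_one_comm.mp hinv]

theorem submatrix (hH : H.IsComplexHadamard) (σ : Equiv.Perm n) :
    (H.submatrix σ id).IsComplexHadamard := by
  refine ⟨fun i k => hH.1 (σ i) k, ?_⟩
  rw [conjTranspose_submatrix, ← submatrix_mul _ _ _ _ _ Function.bijective_id, hH.2]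
  ext i j
  simp [one_apply]

theorem sum_norm_sq_mulVec (hH : H.IsComplexHadamard) (u : n → ℂ) :
    ∑ a, ‖(H *ᵥ u) a‖ ^ 2 = Fintype.card n * ∑ k, ‖u k‖ ^ 2 := by
  have hdot : star (H *ᵥ u) ⬝ᵥ (H *ᵥ u) = (Fintype.card n : ℂ) * (star u ⬝ᵥ u) := by
    rw [star_mulVec, ← dotProduct_mulVec, mulVec_mulVec, hH.conjTranspose_mul_self,
      smul_mulVec, one_mulVec, dotProduct_smul, smul_eq_mul]
  simp only [dotProduct, Pi.star_apply, RCLike.star_def, Complex.conj_mul'] at hdot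
  exact_mod_cast hdot

theorem sum_sum_norm_sq_twisted (hH : H.IsComplexHadamard) {c : n → ℂ} (hc : ∀ k, ‖c k‖ = 1) :
    ∑ a, ∑ b, ‖∑ k, c k * H a k * conj (H b k)‖ ^ 2 = (Fintype.card n : ℝ) ^ 3 := by
  rw [Finset.sum_comm]
  have row (b : n) : ∑ a, ‖∑ k, c k * H a k * conj (H b k)‖ ^ 2 = (Fintype.card n : ℝ) ^ 2 := by
    have parseval := hH.sum_norm_sq_mulVec fun k => c k * conj (H b k)
    simp only [norm_mul, Complex.norm_conj, hc, hH.1, mul_one, one_pow, Finset.sum_const,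
      Finset.card_univ, nsmul_eq_mul] at parseval
    simpa only [mulVec, dotProduct, mul_left_comm, mul_assoc, sq] using parseval
  simp only [row, Finset.sum_const, Finset.card_univ, nsmul_eq_mul]
  ring

theorem sum_sum_norm_sq_shift (hH : H.IsComplexHadamard) (γ : n → ℤ) :
    ∑ r, ∑ t, ‖∑ k, ∏ i, H i k ^ (γ + Pi.single r 1 - Pi.single t 1 : n → ℤ) i‖ ^ 2 =
      (Fintype.card n : ℝ) ^ 3 := by
  simp only [Fintype.prod_zpow_add_single_sub_single (hH.ne_zero · _), div_eq_mul_inv,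
    hH.inv_apply]
  refine hH.sum_sum_norm_sq_twisted fun k => ?_
  simp [norm_prod, norm_zpow, hH.1]

theorem sum_sum_norm_sq_shift_perm (hH : H.IsComplexHadamard) (σ : Equiv.Perm n) (γ : n → ℤ) :
    ∑ r, ∑ t, ‖∑ k, ∏ i, H i k ^ (γ + Pi.single r 1 - Pi.single t 1 : n → ℤ) (σ i)‖ ^ 2 =
      (Fintype.card n : ℝ) ^ 3 := by
  have reindex (γ' : n → ℤ) (k : n) :
      ∏ i, H i k ^ γ' (σ i) = ∏ i, H.submatrix σ.symm id i k ^ γ' i := by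
    rw [← Equiv.prod_comp σ fun i => H.submatrix σ.symm id i k ^ γ' i]
    simp
  simp only [reindex]
  exact (hH.submatrix σ.symm).sum_sum_norm_sq_shift γ

end IsComplexHadamard

end Matrix

/-- For d×d complex Hadamard matrices H₁,…,H_d and any γ ∈ ℤ^d,
d·G(γ) + Σ_{r≠t} G(γ + π_r − π_t) = d⁴. -/
theorem hadamard_G_shift_sum (d : ℕ) (Hs : Fin d → Matrix (Fin d) (Fin d) ℂ)
    (hmod : ∀ j i k, ‖(Hs j) i k‖ = 1)
    (hH : ∀ j, (Hs j) * (Hs j).conjTranspose = (d : ℂ) • (1 : Matrix (Fin d) (Fin d) ℂ))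
    (γ : Fin d → ℤ) :
    (d : ℝ) * bigG d Hs γ +
    (∑ r : Fin d, ∑ t : Fin d,
        if r ≠ t then bigG d Hs (γ + Pi.single r 1 - Pi.single t 1) else 0) = (d : ℝ) ^ 4 := by
  have hHad (j : Fin d) : (Hs j).IsComplexHadamard := ⟨hmod j, by simpa using hH j⟩
  have split := Fintype.sum_sum_eq_sum_diag_add_sum_sum_ite_ne fun r t =>
    bigG d Hs (γ + Pi.single r 1 - Pi.single t 1)
  simp only [add_sub_cancel_right, Finset.sum_const, Finset.card_univ, Fintype.card_fin,
    nsmul_eq_mul] at split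
  rw [← split]
  calc ∑ r, ∑ t, bigG d Hs (γ + Pi.single r 1 - Pi.single t 1)
      = (1 / d.factorial : ℝ) * ∑ σ : Equiv.Perm (Fin d), ∑ j : Fin d, (d : ℝ) ^ 3 := by
        simp only [bigG, ← Finset.mul_sum, Finset.sum_comm (γ := Fin d) (α := Equiv.Perm (Fin d))]
        refine congrArg _ (Finset.sum_congr rfl fun σ _ => ?_)
        rw [Finset.sum_congr rfl fun r _ => Finset.sum_comm, Finset.sum_comm]
        refine Finset.sum_congr rfl fun j _ => ?_
        simpa using (hHad j).sum_sum_norm_sq_shift_perm σ γ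
    _ = (d : ℝ) ^ 4 := by
        simp only [Finset.sum_const, Finset.card_univ, Fintype.card_perm, Fintype.card_fin,
          nsmul_eq_mul]
        field_simp
end

section
/- Let H₁, …, H_d be d×d complex Hadamard matrices that are pairwise unbiased. Then for every γ ∈ ℤ^d, d·G(γ) + Σ_{r ≠ t} F(γ + π_r − π_t) = d⁴, where the sum ranges over all ordered pairs (r,t) with 1 ≤ r, t ≤ d and r ≠ t. -/
open Finset

/-!
Fix σ and put `v j k = ∏ i, (H j) i k ^ γ (σ i)`, a unimodular number. Shifting `γ` by
`π_r - π_t` multiplies `v j k` by `(H j) a k * conj ((H j) b k)` with `a = σ⁻¹ r`, `b = σ⁻¹ t`,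
so `Σ_j g_j^σ(γ + π_r - π_t)` is the `(a, b)` entry of `M = Σ_j H_j diag(v j) H_jᴴ`.
The squared Frobenius norm of `M` is a Hermitian form in `v` whose coefficients are the squared
moduli of inner products of columns of the `H_j`: `d² δ` within one basis, `d` across two bases.
Hence `‖M‖² = d |Σ_j g_j|² + d⁴ - d Σ_j |g_j|²`, while every diagonal entry of `M` is `Σ_j g_j`.
Removing the diagonal gives the identity for each σ, and averaging over σ gives the theorem.
-/

open Matrix ComplexConjugate

theorem Matrix.conjTranspose_mul_self_eq_smul_one {𝕜 n : Type*} [RCLike 𝕜] [Fintype n]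
    [DecidableEq n] {A : Matrix n n 𝕜} {c : 𝕜} (h : A * Aᴴ = c • 1) : Aᴴ * A = c • 1 := by
  rcases eq_or_ne c 0 with rfl | hc
  · open scoped ComplexOrder in rw [zero_smul, self_mul_conjTranspose_eq_zero] at h
    simp [h]
  · have hinv : (c⁻¹ • Aᴴ) * A = 1 :=
      mul_eq_one_comm.mp (by rw [Matrix.mul_smul, h, smul_smul, inv_mul_cancel₀ hc, one_smul])
    rw [← hinv, Matrix.smul_mul, smul_smul, mul_inv_cancel₀ hc, one_smul]

theorem prod_zpow_add_single_sub_single {K n : Type*} [Field K] [Fintype n] [DecidableEq n]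
    {z : n → K} (hz : ∀ i, z i ≠ 0) (e : n → ℤ) (a b : n) :
    ∏ i, z i ^ (e + Pi.single a 1 - Pi.single b 1 : n → ℤ) i = (∏ i, z i ^ e i) * z a / z b := by
  have prod_single (c : n) : ∏ i, z i ^ (Pi.single c 1 : n → ℤ) i = z c := by
    rw [Fintype.prod_eq_single c fun i hi => by simp [hi]]
    simp
  simp only [Pi.sub_apply, Pi.add_apply, zpow_sub₀ (hz _), zpow_add₀ (hz _), prod_div_distrib,
    prod_mul_distrib, prod_single]

theorem sum_sum_ite_ne {α M : Type*} [Fintype α] [DecidableEq α] [AddCommGroup M]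
    (f : α → α → M) :
    ∑ a, ∑ b, (if a ≠ b then f a b else 0) = ∑ a, ∑ b, f a b - ∑ a, f a a := by
  rw [eq_sub_iff_add_eq, ← sum_add_distrib]
  refine sum_congr rfl fun a _ => ?_
  rw [← sum_filter, filter_ne, sum_erase_add _ _ (mem_univ a)]

theorem ofReal_sum_sq_norm_sum_rankOne {P n : Type*} [Fintype P] [Fintype n]
    (x : P → ℂ) (u : P → n → ℂ) :
    ((∑ a, ∑ b, ‖∑ p, x p * (u p a * conj (u p b))‖ ^ 2 : ℝ) : ℂ) =
      ∑ p, ∑ q, x p * conj (x q) * (‖∑ a, conj (u p a) * u q a‖ ^ 2 : ℝ) := by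
  push_cast
  simp_rw [← Complex.mul_conj', map_sum, map_mul, Complex.conj_conj, sum_mul_sum, mul_sum]
  simp only [sum_comm (s := (univ : Finset n)) (t := (univ : Finset P))]
  refine sum_congr rfl fun p _ => sum_congr rfl fun q _ => ?_
  rw [sum_comm]
  refine sum_congr rfl fun a _ => sum_congr rfl fun b _ => ?_
  ring

section Unbiased

variable {ι n : Type*} [Fintype n] [DecidableEq ι] [DecidableEq n]

theorem sq_norm_sum_conj_mul_eq_ite {H : ι → Matrix n n ℂ}
    (hcol : ∀ j, (H j)ᴴ * H j = (Fintype.card n : ℂ) • 1)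
    (hunb : ∀ j j', j ≠ j' → ∀ k l : n, ‖∑ i, conj (H j i k) * H j' i l‖ ^ 2 = Fintype.card n)
    (j j' : ι) (k l : n) :
    ‖∑ i, conj (H j i k) * H j' i l‖ ^ 2 =
      if j = j' then (if k = l then (Fintype.card n : ℝ) ^ 2 else 0) else Fintype.card n := by
  by_cases hj : j = j'
  · subst hj
    have h := congr_fun (congr_fun (hcol j) k) l
    simp only [mul_apply, conjTranspose_apply, RCLike.star_def, Matrix.smul_apply, one_apply,
      smul_eq_mul] at h
    rw [h, if_pos rfl]
    split_ifs <;> simp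
  · simp [hj, hunb j j' hj k l]

variable [Fintype ι]

theorem sum_sum_mul_conj_mul_ite_fst_eq (x : ι × n → ℂ) (N : ℂ) :
    ∑ p, ∑ q, x p * conj (x q) * (if p.1 = q.1 then (if p.2 = q.2 then N ^ 2 else 0) else N) =
      N * ((∑ p, x p) * conj (∑ p, x p)) + N ^ 2 * ∑ p, x p * conj (x p) -
        N * ∑ j, (∑ k, x (j, k)) * conj (∑ k, x (j, k)) := by
  have hsplit (p q : ι × n) : (if p.1 = q.1 then (if p.2 = q.2 then N ^ 2 else 0) else N) =
      N + (if p.1 = q.1 then (if p.2 = q.2 then N ^ 2 else 0) - N else 0) := by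
    split_ifs <;> ring
  simp_rw [hsplit, mul_add, sum_add_distrib, map_sum, sum_mul_sum, mul_sum]
  simp only [Fintype.sum_prod_type, mul_ite, mul_sub, mul_zero, sum_ite_irrel, sum_sub_distrib,
    sum_ite_eq, mem_univ, ↓reduceIte, sum_const_zero, mul_comm N, mul_comm (N ^ 2)]
  ring

theorem card_mul_sum_sq_norm_add_sum_offDiag (H : ι → Matrix n n ℂ)
    (hmod : ∀ j i k, ‖H j i k‖ = 1)
    (hcol : ∀ j, (H j)ᴴ * H j = (Fintype.card n : ℂ) • 1)
    (hunb : ∀ j j', j ≠ j' → ∀ k l : n, ‖∑ i, conj (H j i k) * H j' i l‖ ^ 2 = Fintype.card n)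
    (v : ι → n → ℂ) (hv : ∀ j k, ‖v j k‖ = 1) :
    (Fintype.card n : ℝ) * ∑ j, ‖∑ k, v j k‖ ^ 2 +
        ∑ a, ∑ b, (if a ≠ b then ‖∑ j, ∑ k, v j k * (H j a k * conj (H j b k))‖ ^ 2 else 0) =
      Fintype.card ι * Fintype.card n ^ 3 := by
  set S : n → n → ℂ := fun a b => ∑ j, ∑ k, v j k * (H j a k * conj (H j b k))
  have hS (a b : n) : S a b = ∑ p : ι × n, v p.1 p.2 * (H p.1 a p.2 * conj (H p.1 b p.2)) :=
    (Fintype.sum_prod_type fun p : ι × n => v p.1 p.2 * (H p.1 a p.2 * conj (H p.1 b p.2))).symm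
  have hdiag (a : n) : S a a = ∑ j, ∑ k, v j k := by
    simp [S, Complex.mul_conj', hmod]
  have htotal : ∑ a, ∑ b, ‖S a b‖ ^ 2 =
      Fintype.card n * ‖∑ j, ∑ k, v j k‖ ^ 2 + Fintype.card ι * Fintype.card n ^ 3 -
        Fintype.card n * ∑ j, ‖∑ k, v j k‖ ^ 2 := by
    apply Complex.ofReal_injective
    simp_rw [hS, ofReal_sum_sq_norm_sum_rankOne, sq_norm_sum_conj_mul_eq_ite hcol hunb]
    push_cast [apply_ite ((↑) : ℝ → ℂ)]
    rw [sum_sum_mul_conj_mul_ite_fst_eq (fun p => v p.1 p.2)]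
    simp only [Complex.mul_conj', hv, Fintype.sum_prod_type, one_pow, Complex.ofReal_one,
      sum_const, card_univ, Fintype.card_prod, nsmul_eq_mul, mul_one]
    push_cast
    ring
  rw [sum_sum_ite_ne (fun a b => ‖S a b‖ ^ 2), htotal]
  simp only [hdiag, sum_const, card_univ, nsmul_eq_mul]
  ring

end Unbiased

section Shift

variable {n : Type*} [Fintype n] [DecidableEq n] {H : n → Matrix n n ℂ}

theorem card_mul_sum_sq_norm_add_sum_shift (hmod : ∀ j i k, ‖H j i k‖ = 1)
    (hcol : ∀ j, (H j)ᴴ * H j = (Fintype.card n : ℂ) • 1)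
    (hunb : ∀ j j', j ≠ j' → ∀ k l : n, ‖∑ i, conj (H j i k) * H j' i l‖ ^ 2 = Fintype.card n)
    (e : n → ℤ) :
    (Fintype.card n : ℝ) * ∑ j, ‖∑ k, ∏ i, H j i k ^ e i‖ ^ 2 +
        ∑ a, ∑ b, (if a ≠ b then
          ‖∑ j, ∑ k, ∏ i, H j i k ^ (e + Pi.single a 1 - Pi.single b 1 : n → ℤ) i‖ ^ 2 else 0) =
      Fintype.card n ^ 4 := by
  have hne (j i k) : H j i k ≠ 0 := fun h => by simpa [h] using hmod j i k
  have hshift (j k a b) : ∏ i, H j i k ^ (e + Pi.single a 1 - Pi.single b 1 : n → ℤ) i =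
      (∏ i, H j i k ^ e i) * (H j a k * conj (H j b k)) := by
    rw [prod_zpow_add_single_sub_single (hne j · k), div_eq_mul_inv,
      Complex.inv_eq_conj (hmod j b k), mul_assoc]
  simp_rw [hshift]
  rw [card_mul_sum_sq_norm_add_sum_offDiag H hmod hcol hunb _
    fun j k => by simp [norm_prod, norm_zpow, hmod]]
  ring

theorem card_mul_sum_sq_norm_add_sum_shift_perm (hmod : ∀ j i k, ‖H j i k‖ = 1)
    (hcol : ∀ j, (H j)ᴴ * H j = (Fintype.card n : ℂ) • 1)
    (hunb : ∀ j j', j ≠ j' → ∀ k l : n, ‖∑ i, conj (H j i k) * H j' i l‖ ^ 2 = Fintype.card n)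
    (γ : n → ℤ) (σ : Equiv.Perm n) :
    (Fintype.card n : ℝ) * ∑ j, ‖∑ k, ∏ i, H j i k ^ γ (σ i)‖ ^ 2 +
        ∑ r, ∑ t, (if r ≠ t then
          ‖∑ j, ∑ k, ∏ i, H j i k ^ (γ + Pi.single r 1 - Pi.single t 1 : n → ℤ) (σ i)‖ ^ 2
          else 0) =
      Fintype.card n ^ 4 := by
  rw [← card_mul_sum_sq_norm_add_sum_shift hmod hcol hunb (γ ∘ σ)]
  congr 1
  symm
  refine Fintype.sum_equiv σ _ _ fun a => Fintype.sum_equiv σ _ _ fun b => ?_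
  simp [σ.injective.ne_iff, Pi.single_apply, σ.injective.eq_iff]

end Shift

/-- For pairwise unbiased d×d complex Hadamard matrices H₁,…,H_d and any γ ∈ ℤ^d,
d·G(γ) + Σ_{r≠t} F(γ + π_r − π_t) = d⁴. -/
theorem mub_G_F_shift_sum (d : ℕ) (Hs : Fin d → Matrix (Fin d) (Fin d) ℂ)
    (hmod : ∀ j i k, ‖(Hs j) i k‖ = 1)
    (hH : ∀ j, (Hs j) * (Hs j).conjTranspose = (d : ℂ) • (1 : Matrix (Fin d) (Fin d) ℂ))
    (hunb : ∀ j j', j ≠ j' → ∀ k l : Fin d,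
      ‖∑ i : Fin d, (starRingEnd ℂ) ((Hs j) i k) * (Hs j') i l‖ ^ 2 = d)
    (γ : Fin d → ℤ) :
    (d : ℝ) * bigG d Hs γ +
    (∑ r : Fin d, ∑ t : Fin d,
        if r ≠ t then bigF d Hs (γ + Pi.single r 1 - Pi.single t 1) else 0) = (d : ℝ) ^ 4 := by
  have hcol (j : Fin d) : (Hs j)ᴴ * Hs j = (Fintype.card (Fin d) : ℂ) • 1 := by
    rw [Fintype.card_fin]
    exact Matrix.conjTranspose_mul_self_eq_smul_one (hH j)
  have hper (σ : Equiv.Perm (Fin d)) :=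
    card_mul_sum_sq_norm_add_sum_shift_perm hmod hcol (by simpa using hunb) γ σ
  simp only [Fintype.card_fin] at hper
  calc _ = 1 / (Nat.factorial d : ℝ) * ∑ σ : Equiv.Perm (Fin d),
        ((d : ℝ) * ∑ j, ‖∑ k, ∏ i, Hs j i k ^ γ (σ i)‖ ^ 2 +
          ∑ r, ∑ t, (if r ≠ t then
            ‖∑ j, ∑ k, ∏ i, Hs j i k ^ (γ + Pi.single r 1 - Pi.single t 1 : Fin d → ℤ) (σ i)‖ ^ 2
            else 0)) := by
        simp only [bigG, bigF, ← mul_ite_zero, ite_sum_zero, ← mul_sum, sum_add_distrib]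
        simp only [sum_comm (γ := Fin d) (α := Equiv.Perm (Fin d))]
        ring
    _ = (d : ℝ) ^ 4 := by
        simp only [hper, sum_const, card_univ, Fintype.card_perm, Fintype.card_fin, nsmul_eq_mul]
        field_simp
end

section
/- The conclusion of Theorem 1 fails for the isolated spectral Hadamard matrix S₆⁽⁰⁾: for ρ = (1,1,1,−1,−1,−1) one has g(ρ) = Σ_{k=1}^{6} Π_{i=1}^{6} (S₆⁽⁰⁾)_{ik}^{ρ_i} ≠ 0. -/
/-!
Since ω⁻¹ = ω², the column products of S₆⁽⁰⁾ with exponents ρ are 1, ω², ω², 1, ω², 1, so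
g(ρ) = 3(1 + ω²). This vanishes only if ω² = -1, which together with ω³ = 1 forces ω = -1 and
then 1 = ω² = -1.
-/

section SpectralS6

variable {K : Type*} [Field K]

/-- The paper's S₆⁽⁰⁾, written over any field in terms of a cube root of unity ω. -/
def spectralS6 (ω : K) : Matrix (Fin 6) (Fin 6) K :=
  !![1, 1, 1,   1,   1,   1;
     1, 1, ω,   ω,   ω^2, ω^2;
     1, ω, 1,   ω^2, ω^2, ω;
     1, ω, ω^2, 1,   ω,   ω^2;
     1, ω^2, ω^2, ω, 1,   ω;
     1, ω^2, ω,  ω^2, ω,  1]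

theorem sum_prod_zpow_spectralS6 {ω : K} (hω : ω ^ 3 = 1) :
    ∑ k : Fin 6, ∏ i : Fin 6, spectralS6 ω i k ^ (![1, 1, 1, -1, -1, -1] : Fin 6 → ℤ) i =
      3 * (1 + ω ^ 2) := by
  have hinv : ω⁻¹ = ω ^ 2 := inv_eq_of_mul_eq_one_left (by linear_combination hω)
  have hinv_sq : (ω ^ 2)⁻¹ = ω := inv_eq_of_mul_eq_one_left (by linear_combination hω)
  simp only [spectralS6, Fin.sum_univ_six, Fin.prod_univ_six, Matrix.of_apply,
    Matrix.cons_val, zpow_neg, zpow_one, inv_one, hinv, hinv_sq]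
  linear_combination (2 * ω ^ 2 + 2 + ω ^ 5 + ω ^ 2 + 2 * ω ^ 3) * hω

theorem one_add_sq_ne_zero_of_pow_three_eq_one [NeZero (2 : K)] {ω : K} (hω : ω ^ 3 = 1) :
    1 + ω ^ 2 ≠ 0 := fun h ↦
  two_ne_zero (α := K) (by linear_combination (1 - ω ^ 2 + ω) * h + (ω - 1) * hω)

end SpectralS6

theorem exp_two_pi_I_div_three_pow_three : Complex.exp (2 * Real.pi * Complex.I / 3) ^ 3 = 1 :=
  (Complex.isPrimitiveRoot_exp 3 (by norm_num)).pow_eq_one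

/-- The conclusion of Theorem 1 fails for the isolated spectral Hadamard matrix S₆⁽⁰⁾:
for ρ = (1,1,1,−1,−1,−1) one has g(ρ) = Σ_k Π_i (S₆⁽⁰⁾)_{ik}^{ρ_i} ≠ 0. -/
theorem spectral_matrix_g_ne_zero (ω : ℂ) (hω : ω = Complex.exp (2 * Real.pi * Complex.I / 3))
    (S : Matrix (Fin 6) (Fin 6) ℂ)
    (hS : S = !![1, 1, 1,   1,   1,   1;
                 1, 1, ω,   ω,   ω^2, ω^2;
                 1, ω, 1,   ω^2, ω^2, ω;
                 1, ω, ω^2, 1,   ω,   ω^2;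
                 1, ω^2, ω^2, ω, 1,   ω;
                 1, ω^2, ω,  ω^2, ω,  1])
    (ρ : Fin 6 → ℤ) (hρ : ρ = ![1, 1, 1, -1, -1, -1]) :
    ∑ k : Fin 6, ∏ i : Fin 6, S i k ^ ρ i ≠ 0 := by
  have hω3 : ω ^ 3 = 1 := hω ▸ exp_two_pi_I_div_three_pow_three
  subst hS hρ
  exact (sum_prod_zpow_spectralS6 hω3).trans_ne
    (mul_ne_zero three_ne_zero (one_add_sq_ne_zero_of_pow_three_eq_one hω3))
end
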